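/- Let α : ℕ → ℝ be defined by α_i = 2^{-ν(i+1)}, where ν(m) is the 2-adic valuation of m (so the sequence α is 1, 1/2, 1, 1/4, 1, 1/2, 1, 1/8, ... , the 'abacaba' sequence). Then liminf_{k → ∞} (α_0 · α_1 · ⋯ · α_{k-1})^{1/k} > 0. -/

import Mathlib

open Filter

/-- The "abacaba" sequence `αᵢ = 2^{-ν(i+1)}` (ν the 2-adic valuation). -/
noncomputable def abacaba (i : ℕ) : ℝ := (2 : ℝ)⁻¹ ^ (padicValNat 2 (i + 1))

/-! Since `∏_{i<k} αᵢ = 2^{-ν(k!)}` and Legendre's formula gives `ν(k!) < k`, every geometric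
mean `(α₀ ⋯ α_{k-1})^{1/k}` lies in `[1/2, 1]`, so the liminf is at least `1/2`. -/

open Finset Nat

theorem sum_range_padicValNat_add_one (p : ℕ) [Fact p.Prime] (k : ℕ) :
    ∑ i ∈ range k, padicValNat p (i + 1) = padicValNat p k ! := by
  induction k with
  | zero => simp
  | succ k ih =>
    rw [sum_range_succ, ih, factorial_succ, padicValNat.mul k.succ_ne_zero k.factorial_ne_zero,
      add_comm]

theorem prod_range_abacaba (k : ℕ) :
    ∏ i ∈ range k, abacaba i = 2⁻¹ ^ padicValNat 2 k ! := by
  simp only [abacaba, prod_pow_eq_pow_sum, sum_range_padicValNat_add_one]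

theorem abacaba_nonneg (i : ℕ) : 0 ≤ abacaba i := by
  unfold abacaba; positivity

theorem abacaba_le_one (i : ℕ) : abacaba i ≤ 1 :=
  pow_le_one₀ (by norm_num) (by norm_num)

theorem rpow_inv_prod_range_abacaba_le_one (k : ℕ) :
    (∏ i ∈ range k, abacaba i) ^ (k : ℝ)⁻¹ ≤ 1 :=
  Real.rpow_le_one (prod_nonneg fun i _ => abacaba_nonneg i)
    (prod_le_one (fun i _ => abacaba_nonneg i) fun i _ => abacaba_le_one i) (by positivity)

theorem inv_two_le_rpow_inv_prod_range_abacaba (k : ℕ) :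
    2⁻¹ ≤ (∏ i ∈ range k, abacaba i) ^ (k : ℝ)⁻¹ := by
  rcases eq_or_ne k 0 with rfl | hk
  · norm_num
  rw [Real.le_rpow_inv_iff_of_pos (by norm_num) (prod_nonneg fun i _ => abacaba_nonneg i)
    (by positivity), Real.rpow_natCast, prod_range_abacaba]
  exact pow_le_pow_of_le_one (by norm_num) (by norm_num)
    (padicValNat_factorial_lt_of_ne_zero 2 hk).le

/-- Kakutani's estimate: the geometric means of partial products of the abacaba
sequence have strictly positive liminf. -/
theorem abacaba_liminf_pos :
    0 < liminf (fun k : ℕ =>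
      (∏ i ∈ Finset.range k, abacaba i) ^ ((k : ℝ)⁻¹)) atTop := by
  have hcobdd : IsCoboundedUnder (· ≥ ·) atTop
      fun k : ℕ => (∏ i ∈ range k, abacaba i) ^ (k : ℝ)⁻¹ :=
    isBoundedUnder_of_eventually_le (.of_forall rpow_inv_prod_range_abacaba_le_one)
      |>.isCoboundedUnder_ge
  calc (0 : ℝ) < 2⁻¹ := by norm_num
    _ ≤ _ := le_liminf_of_le hcobdd (.of_forall inv_two_le_rpow_inv_prod_range_abacaba)
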